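/- Let τ be a cycle of weight ≥ 1 on C ⊆ {1,…,n}, and let i, k ∈ C with i ≠ k. Then x^{(τ,i)} ≤_i x^{(τ,k)}. -/

import Mathlib

/-!
Write `W(u, m)` for the weight of the `τ`-walk of length `m` starting at `u`, so that
`x_l = W(k, m)⁻¹` and `y_l = W(i, c)⁻¹` for the first hitting times `m` and `c` of `l`.
A closed walk in `C` winds around the cycle a whole number of times, so its weight is a
power of the cycle weight and hence `≥ 1`. The walk `k → i → l` therefore weighs at least
as much as the shortest walk `k → l`, i.e. `W(k, m) ≤ x_i⁻¹ · y_l⁻¹`, which is `y_l ≤ x_l / x_i`.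
-/

open Finset Function

section WalkWeight

variable {α M : Type*} [CommMonoid M] (w : α → α → M) (τ : α → α)

def walkWeight (u : α) (m : ℕ) : M :=
  ∏ s ∈ range m, w (τ^[s] u) (τ^[s + 1] u)

variable {w τ}

@[simp]
lemma walkWeight_zero (u : α) : walkWeight w τ u 0 = 1 :=
  prod_range_zero _

lemma walkWeight_eq_prod_apply (u : α) (m : ℕ) :
    walkWeight w τ u m = ∏ s ∈ range m, w (τ^[s] u) (τ (τ^[s] u)) := by
  simp only [walkWeight, iterate_succ_apply']

lemma walkWeight_add (u : α) (m d : ℕ) :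
    walkWeight w τ u (m + d) = walkWeight w τ u m * walkWeight w τ (τ^[m] u) d := by
  rw [walkWeight, walkWeight, walkWeight, prod_range_add]
  congr 1
  refine prod_congr rfl fun s _ => ?_
  rw [← iterate_add_apply, ← iterate_add_apply, Nat.add_right_comm s 1 m, Nat.add_comm s m]

lemma walkWeight_mul_of_isPeriodicPt {p : ℕ} {u : α} (hu : IsPeriodicPt τ p u) (q : ℕ) :
    walkWeight w τ u (p * q) = walkWeight w τ u p ^ q := by
  induction q with
  | zero => simp
  | succ q ih => rw [Nat.mul_succ, walkWeight_add, hu.mul_const q, ih, pow_succ]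

end WalkWeight

section CycleOn

variable {α M : Type*} {C : Finset α} {τ : α → α}

lemma minimalPeriod_pos_of_cyclic (hmaps : Set.MapsTo τ C C)
    (hcyc : ∀ l ∈ C, ∀ l' ∈ C, ∃ m : ℕ, τ^[m] l = l') {u : α} (hu : u ∈ C) :
    0 < minimalPeriod τ u := by
  obtain ⟨m, hm⟩ := hcyc (τ u) (hmaps hu) u hu
  exact IsPeriodicPt.minimalPeriod_pos m.succ_pos
    (by rwa [IsPeriodicPt, IsFixedPt, iterate_succ_apply])

lemma walkWeight_minimalPeriod_of_cyclic [CommMonoid M] (w : α → α → M)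
    (hmaps : Set.MapsTo τ C C) (hcyc : ∀ l ∈ C, ∀ l' ∈ C, ∃ m : ℕ, τ^[m] l = l')
    {u : α} (hu : u ∈ C) :
    walkWeight w τ u (minimalPeriod τ u) = ∏ j ∈ C, w j (τ j) := by
  rw [walkWeight_eq_prod_apply]
  refine prod_nbij (τ^[·] u) (fun s _ => hmaps.iterate s hu) ?_ ?_ fun _ _ => rfl
  · simpa only [coe_range] using iterate_injOn_Iio_minimalPeriod
  · intro j hj
    obtain ⟨m, rfl⟩ := hcyc u hu j hj
    exact ⟨m % minimalPeriod τ u, by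
      simpa using Nat.mod_lt m (minimalPeriod_pos_of_cyclic hmaps hcyc hu),
      iterate_mod_minimalPeriod_eq⟩

variable [CommMonoid M] [Preorder M] [MulLeftMono M] {w : α → α → M}

lemma one_le_walkWeight_of_isPeriodicPt (hmaps : Set.MapsTo τ C C)
    (hcyc : ∀ l ∈ C, ∀ l' ∈ C, ∃ m : ℕ, τ^[m] l = l') (hw : 1 ≤ ∏ j ∈ C, w j (τ j))
    {u : α} (hu : u ∈ C) {d : ℕ} (hd : IsPeriodicPt τ d u) : 1 ≤ walkWeight w τ u d := by
  obtain ⟨q, rfl⟩ := hd.minimalPeriod_dvd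
  rw [walkWeight_mul_of_isPeriodicPt (isPeriodicPt_minimalPeriod τ u),
    walkWeight_minimalPeriod_of_cyclic w hmaps hcyc hu]
  exact one_le_pow_of_one_le' hw q

lemma walkWeight_le_of_iterate_eq (hmaps : Set.MapsTo τ C C)
    (hcyc : ∀ l ∈ C, ∀ l' ∈ C, ∃ m : ℕ, τ^[m] l = l') (hw : 1 ≤ ∏ j ∈ C, w j (τ j))
    {u : α} (hu : u ∈ C) {m d : ℕ} (hmd : m ≤ d) (h : τ^[m] u = τ^[d] u) :
    walkWeight w τ u m ≤ walkWeight w τ u d := by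
  obtain ⟨e, rfl⟩ := Nat.exists_eq_add_of_le hmd
  have hclosed : IsPeriodicPt τ e (τ^[m] u) := by
    rw [IsPeriodicPt, IsFixedPt, ← iterate_add_apply, Nat.add_comm, h]
  rw [walkWeight_add]
  exact le_mul_of_one_le_right'
    (one_le_walkWeight_of_isPeriodicPt hmaps hcyc hw (hmaps.iterate m hu) hclosed)

lemma walkWeight_find_le [DecidableEq α] (hmaps : Set.MapsTo τ C C)
    (hcyc : ∀ l ∈ C, ∀ l' ∈ C, ∃ m : ℕ, τ^[m] l = l') (hw : 1 ≤ ∏ j ∈ C, w j (τ j))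
    {u l : α} (hu : u ∈ C) (h : ∃ m, τ^[m] u = l) {d : ℕ} (hd : τ^[d] u = l) :
    walkWeight w τ u (Nat.find h) ≤ walkWeight w τ u d :=
  walkWeight_le_of_iterate_eq hmaps hcyc hw hu (Nat.find_le hd) ((Nat.find_spec h).trans hd.symm)

end CycleOn

lemma walkWeight_pos {α R : Type*} [CommMonoidWithZero R] [PartialOrder R] [ZeroLEOneClass R]
    [PosMulStrictMono R] [Nontrivial R] {C : Finset α} {τ : α → α} {w : α → α → R}
    (hmaps : Set.MapsTo τ C C) (hpos : ∀ j ∈ C, 0 < w j (τ j)) {u : α} (hu : u ∈ C) (m : ℕ) :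
    0 < walkWeight w τ u m := by
  rw [walkWeight_eq_prod_apply]
  exact prod_pos fun s _ => hpos _ (hmaps.iterate s hu)

lemma eq_inv_walkWeight_find {α M : Type*} [DecidableEq α] [DivisionCommMonoid M]
    {w : α → α → M} {τ : α → α} {k : α} {x : α → M} (hxk : x k = 1)
    (hxr : ∀ l, l ≠ k → ∀ m : ℕ, τ^[m] k = l → (∀ m' < m, τ^[m'] k ≠ l) →
      x l = (walkWeight w τ k m)⁻¹)
    {l : α} (h : ∃ m, τ^[m] k = l) : x l = (walkWeight w τ k (Nat.find h))⁻¹ := by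
  rcases eq_or_ne l k with rfl | hlk
  · rw [hxk, (Nat.find_eq_zero h).mpr rfl, walkWeight_zero, inv_one]
  · exact hxr l hlk _ (Nat.find_spec h) fun _ => Nat.find_min h

lemma NNReal.inv_le_inv_mul_of_le_mul {a b c : NNReal} (ha : a ≠ 0) (hb : 0 < b) (h : b ≤ a * c) :
    c⁻¹ ≤ b⁻¹ * a :=
  calc c⁻¹ = a * (a * c)⁻¹ := by rw [mul_inv, ← mul_assoc, mul_inv_cancel₀ ha, one_mul]
    _ ≤ a * b⁻¹ := mul_le_mul_right (inv_anti₀ hb h) a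
    _ = b⁻¹ * a := mul_comm a b⁻¹

theorem stmt19_general {n : ℕ} (A : Matrix (Fin n) (Fin n) NNReal) (C : Finset (Fin n))
    (τ : Fin n → Fin n)
    (hmaps : ∀ l ∈ C, τ l ∈ C)
    (hcyclic : ∀ l ∈ C, ∀ l' ∈ C, ∃ m : ℕ, τ^[m] l = l')
    (hw : 1 ≤ ∏ l ∈ C, A l (τ l))
    (hpos : ∀ l ∈ C, 0 < A l (τ l))
    (i : Fin n) (hi : i ∈ C) (k : Fin n) (hk : k ∈ C)
    (x y : Fin n → NNReal)
    (hxk : x k = 1)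
    (hxr : ∀ l : Fin n, l ≠ k → ∀ m : ℕ, τ^[m] k = l → (∀ m' < m, τ^[m'] k ≠ l) →
      x l = (∏ s ∈ Finset.range m, A (τ^[s] k) (τ^[s + 1] k))⁻¹)
    (hyk : y i = 1)
    (hyr : ∀ l : Fin n, l ≠ i → ∀ m : ℕ, τ^[m] i = l → (∀ m' < m, τ^[m'] i ≠ l) →
      y l = (∏ s ∈ Finset.range m, A (τ^[s] i) (τ^[s + 1] i))⁻¹)
    (hy0 : ∀ l : Fin n, (∀ m : ℕ, τ^[m] i ≠ l) → y l = 0) :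
    x i ≠ 0 ∧ y i ≠ 0 ∧ ∀ l, y l * (y i)⁻¹ ≤ x l * (x i)⁻¹ := by
  have hki : ∃ a, τ^[a] k = i := hcyclic k hk i hi
  have hxi : x i = (walkWeight A τ k (Nat.find hki))⁻¹ := eq_inv_walkWeight_find hxk hxr hki
  refine ⟨by simpa [hxi] using (walkWeight_pos hmaps hpos hk _).ne', by simp [hyk], fun l => ?_⟩
  rw [hyk, inv_one, mul_one, hxi, inv_inv]
  by_cases hil : ∃ c, τ^[c] i = l
  · have hkil : τ^[Nat.find hki + Nat.find hil] k = l := by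
      rw [Nat.add_comm, iterate_add_apply, Nat.find_spec hki, Nat.find_spec hil]
    have hkl : ∃ m, τ^[m] k = l := ⟨_, hkil⟩
    have hshortest : walkWeight A τ k (Nat.find hkl) ≤
        walkWeight A τ k (Nat.find hki) * walkWeight A τ i (Nat.find hil) :=
      calc _ ≤ walkWeight A τ k (Nat.find hki + Nat.find hil) :=
            walkWeight_find_le hmaps hcyclic hw hk hkl hkil
        -- `A` is a `Matrix`, not syntactically a function, so `rw` needs `w` spelled out
        _ = _ := by rw [walkWeight_add (w := A), Nat.find_spec hki]
    rw [eq_inv_walkWeight_find hyk hyr hil, eq_inv_walkWeight_find hxk hxr hkl]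
    exact NNReal.inv_le_inv_mul_of_le_mul (walkWeight_pos hmaps hpos hk _).ne'
      (walkWeight_pos hmaps hpos hk _) hshortest
  · rw [hy0 l (not_exists.mp hil)]
    exact zero_le

/-- Let `τ` be a cycle of weight `≥ 1` on `C ⊆ {1,…,n}` and `i, k ∈ C` with `i ≠ k`.
Then `x^{(τ,i)} ≤_i x^{(τ,k)}`, where `x = x^{(τ,k)}` and `y = x^{(τ,i)}` are
characterized as usual, and `y ≤_i x` means `x_i ≠ 0`, `y_i ≠ 0` and
`y_l y_i⁻¹ ≤ x_l x_i⁻¹` for all `l`. -/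
theorem stmt19 {n : ℕ} (A : Matrix (Fin n) (Fin n) NNReal) (C : Finset (Fin n))
    (τ : Fin n → Fin n)
    (hmaps : ∀ l ∈ C, τ l ∈ C)
    (hcyclic : ∀ l ∈ C, ∀ l' ∈ C, ∃ m : ℕ, τ^[m] l = l')
    (hw : 1 ≤ ∏ l ∈ C, A l (τ l))
    (hpos : ∀ l ∈ C, 0 < A l (τ l))
    (i : Fin n) (hi : i ∈ C) (k : Fin n) (hk : k ∈ C) (hik : i ≠ k)
    (x y : Fin n → NNReal)
    (hxk : x k = 1)
    (hxr : ∀ l : Fin n, l ≠ k → ∀ m : ℕ, τ^[m] k = l → (∀ m' < m, τ^[m'] k ≠ l) →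
      x l = (∏ s ∈ Finset.range m, A (τ^[s] k) (τ^[s + 1] k))⁻¹)
    (hx0 : ∀ l : Fin n, (∀ m : ℕ, τ^[m] k ≠ l) → x l = 0)
    (hyk : y i = 1)
    (hyr : ∀ l : Fin n, l ≠ i → ∀ m : ℕ, τ^[m] i = l → (∀ m' < m, τ^[m'] i ≠ l) →
      y l = (∏ s ∈ Finset.range m, A (τ^[s] i) (τ^[s + 1] i))⁻¹)
    (hy0 : ∀ l : Fin n, (∀ m : ℕ, τ^[m] i ≠ l) → y l = 0) :
    x i ≠ 0 ∧ y i ≠ 0 ∧ ∀ l, y l * (y i)⁻¹ ≤ x l * (x i)⁻¹ :=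
  stmt19_general A C τ hmaps hcyclic hw hpos i hi k hk x y hxk hxr hyk hyr hy0
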